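/- Let D ⊆ {0,1}^n be closed under the coordinatewise ternary majority operation (for instance, the solution set of a 2-CNF formula). If a, b ∈ D lie in the same connected component of G(D), then the shortest-path distance between a and b in G(D) equals their Hamming distance |a − b|; moreover, there is a path in G(D) from a to b that flips only coordinates on which a and b differ, each exactly once. -/

import Mathlib

open SimpleGraph

/-- The solution graph of a set `D ⊆ {0,1}^V`: vertices are the elements of `D`,
two vertices are adjacent iff they differ in exactly one coordinate. -/
def solGraph {V : Type*} [Fintype V] [DecidableEq V] (D : Set (V → Bool)) :
    SimpleGraph D where
  Adj a b := hammingDist (a : V → Bool) (b : V → Bool) = 1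
  symm := ⟨fun a b h => by
    have h' : hammingDist (a : V → Bool) (b : V → Bool) = 1 := h
    show hammingDist (b : V → Bool) (a : V → Bool) = 1
    rwa [hammingDist_comm]⟩
  loopless := ⟨fun a h => by
    have h' : hammingDist (a : V → Bool) (a : V → Bool) = 1 := h
    simp [hammingDist_self] at h'⟩

/-- Coordinatewise ternary majority. -/
def majVec {V : Type*} (a b c : V → Bool) : V → Bool :=
  fun i => (a i && b i) || (b i && c i) || (a i && c i)

/-- `D` is closed under the coordinatewise ternary majority operation. -/
def ClosedMaj {V : Type*} (D : Set (V → Bool)) : Prop :=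
  ∀ a b c, a ∈ D → b ∈ D → c ∈ D → majVec a b c ∈ D

/-- Every connected component of `G(R)` is closed under coordinatewise majority. -/
def CompClosedMaj {V : Type*} [Fintype V] [DecidableEq V] (R : Set (V → Bool)) : Prop :=
  ∀ (a b c : V → Bool) (ha : a ∈ R) (hb : b ∈ R) (hc : c ∈ R),
    (solGraph R).Reachable ⟨a, ha⟩ ⟨b, hb⟩ →
    (solGraph R).Reachable ⟨a, ha⟩ ⟨c, hc⟩ →
    ∃ hm : majVec a b c ∈ R, (solGraph R).Reachable ⟨a, ha⟩ ⟨majVec a b c, hm⟩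

/-- Substitute constants `c` in all but the two coordinates `i ≠ j`. -/
def subst2 {r : ℕ} (i j : Fin r) (c : Fin r → Bool) (x y : Bool) : Fin r → Bool :=
  fun k => if k = i then x else if k = j then y else c k

/-- `R` is OR-free: `{01,10,11}` is not obtainable from `R` by fixing `r - 2` coordinates. -/
def ORfree {r : ℕ} (R : Set (Fin r → Bool)) : Prop :=
  ¬ ∃ (i j : Fin r) (_ : i ≠ j) (c : Fin r → Bool),
      ∀ x y : Bool, subst2 i j c x y ∈ R ↔ (x || y) = true

/-- `R` is NAND-free: `{00,01,10}` is not obtainable from `R` by fixing `r - 2` coordinates. -/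
def NANDfree {r : ℕ} (R : Set (Fin r → Bool)) : Prop :=
  ¬ ∃ (i j : Fin r) (_ : i ≠ j) (c : Fin r → Bool),
      ∀ x y : Bool, subst2 i j c x y ∈ R ↔ (!x || !y) = true

/-- A logical relation together with its arity. -/
def BRel := Σ k : ℕ, Set (Fin k → Bool)

/-- A clause `R(ξ₁,…,ξ_k)` over variables `V`: each argument is a variable or a constant. -/
structure BClause (V : Type*) where
  arity : ℕ
  rel : Set (Fin arity → Bool)
  args : Fin arity → V ⊕ Bool

/-- The clause `C` is satisfied by the assignment `x`. -/
def BClause.Sat {V : Type*} (C : BClause V) (x : V → Bool) : Prop :=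
  (fun j => Sum.elim x id (C.args j)) ∈ C.rel

/-- A CNF formula: a finite conjunction (list) of clauses. -/
abbrev BCnf (V : Type*) := List (BClause V)

/-- `x` satisfies every clause of `φ`. -/
def BCnf.Sat {V : Type*} (φ : BCnf V) (x : V → Bool) : Prop :=
  ∀ C ∈ φ, C.Sat x

/-- `φ` is a CNF(S)-formula: every clause uses a relation from `S`. -/
def BCnf.Over {V : Type*} (S : Set BRel) (φ : BCnf V) : Prop :=
  ∀ C ∈ φ, (⟨C.arity, C.rel⟩ : BRel) ∈ S

/-- The set of solutions of a CNF formula. -/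
def solutionSet {V : Type*} (φ : BCnf V) : Set (V → Bool) := {x | φ.Sat x}

/-- A set of relations is tight if all its members are componentwise bijunctive,
or all are OR-free, or all are NAND-free. -/
def Tight (S : Set BRel) : Prop :=
  (∀ R ∈ S, CompClosedMaj R.2) ∨ (∀ R ∈ S, ORfree R.2) ∨ (∀ R ∈ S, NANDfree R.2)

/-- `R` is faithfully expressible from `S`. -/
def FaithfullyExpressible (S : Set BRel) {k : ℕ} (R : Set (Fin k → Bool)) : Prop :=
  ∃ (m : ℕ) (φ : BCnf (Fin k ⊕ Fin m)),
    φ.Over S ∧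
    (∀ a : Fin k → Bool, a ∈ R ↔ ∃ y : Fin m → Bool, φ.Sat (Sum.elim a y)) ∧
    (∀ a ∈ R, (solGraph {y : Fin m → Bool | φ.Sat (Sum.elim a y)}).Connected) ∧
    (∀ a b, a ∈ R → b ∈ R → hammingDist a b = 1 →
      ∃ w : Fin m → Bool, φ.Sat (Sum.elim a w) ∧ φ.Sat (Sum.elim b w))

/-- `D_i`: satisfying assignments of the 3-clause whose first `i` literals are negated. -/
def Dclause (i : ℕ) : Set (Fin 3 → Bool) :=
  {x | ∃ j : Fin 3, if (j : ℕ) < i then x j = false else x j = true}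

/-- `S₃ = {D₀, D₁, D₂, D₃}`: the set of 3-clause relations. -/
def S3 : Set BRel :=
  {⟨3, Dclause 0⟩, ⟨3, Dclause 1⟩, ⟨3, Dclause 2⟩, ⟨3, Dclause 3⟩}

/-
Majority closure makes `x ↦ maj(a, x, b)` a retraction of `D` onto the vertices lying between `a`
and `b` (those agreeing with `a` wherever `a` and `b` agree). It is 1-Lipschitz for the Hamming
distance, so it maps any walk from `a` to `b` to a walk between `a` and `b` that only visits such
vertices. The first step of that walk moves one coordinate closer to `b`, and induction on the
Hamming distance yields a walk of length `|a − b|`; no walk can be shorter.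
-/

namespace SimpleGraph.Walk

variable {V W : Type*} {G : SimpleGraph V} {H : SimpleGraph W}

theorem exists_walk_support_subset_range (f : V → W)
    (hf : ∀ x y, G.Adj x y → f x = f y ∨ H.Adj (f x) (f y)) {x y : V} (p : G.Walk x y) :
    ∃ q : H.Walk (f x) (f y), ∀ u ∈ q.support, u ∈ Set.range f := by
  induction p with
  | nil => exact ⟨nil, by simp⟩
  | cons hadj _ ih =>
    obtain ⟨q, hq⟩ := ih
    rcases hf _ _ hadj with heq | hadj'
    · exact ⟨q.copy heq.symm rfl, by simpa using hq⟩
    · exact ⟨cons hadj' q, by simpa using hq⟩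

end SimpleGraph.Walk

open SimpleGraph

section Hypercube

variable {V : Type*}

/-- `u` lies on a shortest path from `a` to `b` in the hypercube. -/
def IsBetween (a b u : V → Bool) : Prop := ∀ i, a i = b i → u i = a i

theorem isBetween_left (a b : V → Bool) : IsBetween a b a := fun _ _ => rfl

theorem IsBetween.trans {a b w u : V → Bool} (hw : IsBetween a b w) (hu : IsBetween w b u) :
    IsBetween a b u := fun i hi => by
  have hwi := hw i hi
  rw [hu i (hwi.trans hi), hwi]

theorem majVec_self_left (a b : V → Bool) : majVec a a b = a := by
  funext i; simp only [majVec]; cases a i <;> cases b i <;> rfl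

theorem majVec_self_right (a b : V → Bool) : majVec a b b = b := by
  funext i; simp only [majVec]; cases a i <;> cases b i <;> rfl

theorem isBetween_majVec (a b u : V → Bool) : IsBetween a b (majVec a u b) := fun i h => by
  simp only [majVec]; rw [← h]; cases a i <;> cases u i <;> rfl

variable [Fintype V]

theorem IsBetween.hammingDist_add {a b w : V → Bool} (hw : IsBetween a b w) :
    hammingDist a w + hammingDist w b = hammingDist a b := by
  simp only [hammingDist, Finset.card_filter, ← Finset.sum_add_distrib]
  refine Finset.sum_congr rfl fun i _ => ?_
  have := hw i
  revert this
  cases a i <;> cases b i <;> cases w i <;> simp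

theorem hammingDist_majVec_le (a b u v : V → Bool) :
    hammingDist (majVec a u b) (majVec a v b) ≤ hammingDist u v :=
  Finset.card_le_card fun i => by
    simp only [Finset.mem_filter, Finset.mem_univ, true_and]
    intro hne huv
    exact hne (by simp [majVec, huv])

variable [DecidableEq V] {D : Set (V → Bool)}

theorem hammingDist_le_length {x y : D} (p : (solGraph D).Walk x y) :
    hammingDist (x : V → Bool) y ≤ p.length := by
  induction p with
  | nil => simp
  | @cons x w y hadj p ih =>
    have hxw : hammingDist (x : V → Bool) w = 1 := hadj
    have := hammingDist_triangle (x : V → Bool) w y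
    rw [Walk.length_cons]
    omega

theorem exists_walk_isBetween (hmaj : ClosedMaj D) {a b : V → Bool} {ha : a ∈ D} {hb : b ∈ D}
    (hr : (solGraph D).Reachable ⟨a, ha⟩ ⟨b, hb⟩) :
    ∃ q : (solGraph D).Walk ⟨a, ha⟩ ⟨b, hb⟩, ∀ u ∈ q.support, IsBetween a b u := by
  obtain ⟨p⟩ := hr
  let f : D → D := fun x => ⟨majVec a x b, hmaj _ _ _ ha x.2 hb⟩
  have hf : ∀ x y, (solGraph D).Adj x y → f x = f y ∨ (solGraph D).Adj (f x) (f y) := by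
    intro x y hxy
    have hle : hammingDist (f x : V → Bool) (f y) ≤ 1 :=
      (hammingDist_majVec_le a b x y).trans_eq hxy
    rcases Nat.le_one_iff_eq_zero_or_eq_one.mp hle with h0 | h1
    · exact .inl (Subtype.ext (hammingDist_eq_zero.mp h0))
    · exact .inr h1
  obtain ⟨q, hq⟩ := p.exists_walk_support_subset_range f hf
  refine ⟨q.copy (Subtype.ext (majVec_self_left a b)) (Subtype.ext (majVec_self_right a b)),
    fun u hu => ?_⟩
  obtain ⟨v, rfl⟩ := hq u (by simpa using hu)
  exact isBetween_majVec a b v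

theorem exists_walk_length_eq_hammingDist (hmaj : ClosedMaj D) :
    ∀ (k : ℕ) {a b : V → Bool} {ha : a ∈ D} {hb : b ∈ D}, hammingDist a b = k →
      (solGraph D).Reachable ⟨a, ha⟩ ⟨b, hb⟩ →
      ∃ p : (solGraph D).Walk ⟨a, ha⟩ ⟨b, hb⟩,
        p.length = k ∧ ∀ u ∈ p.support, IsBetween a b u
  | 0, a, b, ha, hb, hk, _ => by
    obtain rfl := hammingDist_eq_zero.mp hk
    exact ⟨.nil, rfl, by simpa using isBetween_left a a⟩
  | k + 1, a, b, ha, hb, hk, hr => by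
    obtain ⟨q, hq⟩ := exists_walk_isBetween hmaj hr
    have hab : (⟨a, ha⟩ : D) ≠ ⟨b, hb⟩ := fun h => by
      rw [Subtype.mk.injEq] at h
      simp [h] at hk
    obtain ⟨w, haw, q', rfl⟩ := q.exists_eq_cons_of_ne hab
    have hw : IsBetween a b w := hq w (by simp)
    have hwb : hammingDist (w : V → Bool) b = k := by
      have haw : hammingDist a (w : V → Bool) = 1 := haw
      have := hw.hammingDist_add
      omega
    obtain ⟨r, hr_len, hr_between⟩ := exists_walk_length_eq_hammingDist hmaj k hwb q'.reachable
    refine ⟨.cons haw r, by simp [hr_len], fun u hu => ?_⟩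
    rw [Walk.support_cons, List.mem_cons] at hu
    rcases hu with rfl | hu
    · exact isBetween_left a b
    · exact hw.trans (hr_between u hu)

end Hypercube

/-- In a set `D ⊆ {0,1}^n` closed under coordinatewise majority, the
shortest-path distance in `G(D)` between two connected solutions equals their Hamming
distance; moreover there is a path flipping only coordinates where `a` and `b` differ,
each exactly once. -/
theorem maj_closed_dist_eq_hammingDist {n : ℕ}
    (D : Set (Fin n → Bool)) (hmaj : ClosedMaj D)
    (a b : Fin n → Bool) (ha : a ∈ D) (hb : b ∈ D)
    (hreach : (solGraph D).Reachable ⟨a, ha⟩ ⟨b, hb⟩) :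
    (solGraph D).dist ⟨a, ha⟩ ⟨b, hb⟩ = hammingDist a b ∧
    ∃ p : (solGraph D).Walk ⟨a, ha⟩ ⟨b, hb⟩,
      p.length = hammingDist a b ∧
      ∀ u ∈ p.support, ∀ i : Fin n, a i = b i → (u : Fin n → Bool) i = a i := by
  obtain ⟨p, hp_len, hp⟩ := exists_walk_length_eq_hammingDist hmaj _ rfl hreach
  refine ⟨le_antisymm (hp_len ▸ dist_le p) ?_, p, hp_len, hp⟩
  obtain ⟨q, hq⟩ := hreach.exists_walk_length_eq_dist
  exact hq ▸ hammingDist_le_length q
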